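/- arXiv:2107.09003 — 2 statements merged into one kernel-verified Lean document; each statement's English description precedes it below -/
import Mathlib

section
/- Let X be a finite set, P row-stochastic, γ ∈ [0,1), c : X → ℝ, and let Q be the unique fixed point of Q = c + γPQ. Let l ∈ ℝ and ε > 0, and let ρ : X → ℝ with ρ(x) ≥ 1/ε for all x. Let α ≥ 0, and suppose that α/2 ≥ ε·max_x ((I − γP)(l·𝟙 − Q))(x) whenever this max is positive (otherwise α ≥ 0 is arbitrary). Then the fixed point Q̂ of Q̂ = c + γPQ̂ + (α/2)ρ satisfies Q̂(x) ≥ l for all x. -/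
theorem stmt_8 {X : Type*} [Fintype X] [Nonempty X] [DecidableEq X]
    (P : Matrix X X ℝ) (hP0 : ∀ x y, 0 ≤ P x y) (hP1 : ∀ x, ∑ y, P x y = 1)
    (γ : ℝ) (hγ0 : 0 ≤ γ) (hγ1 : γ < 1)
    (c Q : X → ℝ) (hQ : ∀ x, Q x = c x + γ * P.mulVec Q x)
    (l : ℝ) (ε : ℝ) (hε : 0 < ε)
    (ρ : X → ℝ) (hρ : ∀ x, 1 / ε ≤ ρ x)
    (α : ℝ)
    (hα : max (2 * ε * (⨆ x, (1 - γ • P).mulVec (fun y => l - Q y) x)) 0 ≤ α)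
    (Qhat : X → ℝ)
    (hQhat : ∀ x, Qhat x = c x + γ * P.mulVec Qhat x + (α / 2) * ρ x) :
    ∀ x, l ≤ Qhat x := by
  set S : X → ℝ := (1 - γ • P).mulVec (fun y => l - Q y) with hS
  have hSval : ∀ x, S x = (1 - γ) * l - c x := by
    intro x
    have h1 : ∑ y, P x y * (l - Q y) = l - P.mulVec Q x := by
      simp only [mul_sub, Finset.sum_sub_distrib]
      rw [← Finset.sum_mul, hP1, Matrix.mulVec, dotProduct]
      ring
    have h2 : S x = (l - Q x) - γ * (∑ y, P x y * (l - Q y)) := by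
      simp [hS, Matrix.sub_mulVec, Matrix.one_mulVec, Matrix.smul_mulVec,
        Matrix.mulVec, dotProduct]
    rw [h2, h1]
    have := hQ x
    linarith
  have hα0 : (0:ℝ) ≤ α := le_trans (le_max_right _ _) hα
  have hα2 : 2 * ε * (⨆ x, S x) ≤ α := le_trans (le_max_left _ _) hα
  have hsup : ∀ x, S x ≤ ⨆ x, S x := fun x =>
    le_ciSup (Set.Finite.bddAbove (Set.finite_range S)) x
  have hkey : ∀ x, S x ≤ (α / 2) * ρ x := by
    intro x
    have h1 : ε * S x ≤ α / 2 := by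
      have := mul_le_mul_of_nonneg_left (hsup x) (le_of_lt hε)
      linarith
    have h2 : (α / 2) * (1 / ε) ≤ (α / 2) * ρ x :=
      mul_le_mul_of_nonneg_left (hρ x) (by linarith)
    have h3 : S x ≤ (α / 2) * (1 / ε) := by
      rw [mul_one_div, le_div_iff₀ hε]
      linarith
    linarith
  obtain ⟨x0, -, hx0⟩ := Finset.exists_min_image Finset.univ Qhat Finset.univ_nonempty
  have hPQ : Qhat x0 ≤ P.mulVec Qhat x0 := by
    have : Qhat x0 = ∑ y, P x0 y * Qhat x0 := by
      rw [← Finset.sum_mul, hP1, one_mul]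
    rw [this, Matrix.mulVec, dotProduct]
    exact Finset.sum_le_sum fun y _ =>
      mul_le_mul_of_nonneg_left (hx0 y (Finset.mem_univ y)) (hP0 x0 y)
  have hmin : l ≤ Qhat x0 := by
    have h1 := hQhat x0
    have h2 := hkey x0
    have h3 := hSval x0
    have h4 : γ * Qhat x0 ≤ γ * P.mulVec Qhat x0 :=
      mul_le_mul_of_nonneg_left hPQ hγ0
    nlinarith [hγ1]
  exact fun x => le_trans hmin (hx0 x (Finset.mem_univ x))
end

section
/- Performance difference lemma: for a finite MDP with discount γ ∈ [0,1), reward r, two policies π and π', value functions V^π, V^{π'}, Q-function Q^{π'}, and advantage A^{π'}(s,a) := Q^{π'}(s,a) − V^{π'}(s), it holds that V^{π'}(s₀) − V^π(s₀) = −(1/(1−γ)) · E_{s ∼ μ^π_{s₀}, a ∼ π(·|s)}[A^{π'}(s,a)], where μ^π_{s₀}(s) = (1−γ)∑_{t≥0} γ^t Pr[s_t = s | s₀, π] is the normalized discounted state occupancy of π started at s₀. -/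
/-!
Put `f := V' - V` and let `M` be the state transition matrix of `π`. The Bellman equation for `V`
turns the `π`-average of the advantage at `s` into `(γ M f - f) s`. The discounted visit vector
`ν := ∑ₜ γᵗ dₜ` satisfies `ν = d₀ + γ ν M`, so `⟪ν, γ M f - f⟫ = -⟪d₀, f⟫ = -f s₀`; multiplying by
`1 - γ` turns `ν` into `μ`.
-/

open Finset Matrix

section DiscountedChain

variable {n : Type*} [Fintype n]

theorem vecMul_mem_stdSimplex [DecidableEq n] {R : Type*} [Semiring R] [PartialOrder R]
    [IsOrderedRing R] {M : Matrix n n R} (hM : M ∈ rowStochastic R n) {x : n → R}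
    (hx : x ∈ stdSimplex R n) :
    x ᵥ* M ∈ stdSimplex R n := by
  refine ⟨nonneg_vecMul_of_mem_rowStochastic hM hx.1, ?_⟩
  rw [← dotProduct_one]
  exact vecMul_dotProduct_one_eq_one_rowStochastic hM (by rw [dotProduct_one, hx.2])

theorem mem_stdSimplex_of_vecMul_succ [DecidableEq n] {R : Type*} [Semiring R]
    [PartialOrder R] [IsOrderedRing R] {M : Matrix n n R} (hM : M ∈ rowStochastic R n)
    {d : ℕ → n → R} (h0 : d 0 ∈ stdSimplex R n) (hsucc : ∀ t, d (t + 1) = d t ᵥ* M) (t : ℕ) :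
    d t ∈ stdSimplex R n := by
  induction t with
  | zero => exact h0
  | succ t ih => exact hsucc t ▸ vecMul_mem_stdSimplex hM ih

theorem dotProduct_smul_mulVec_sub_eq_neg {R : Type*} [CommRing R] {M : Matrix n n R}
    {γ : R} {ν δ : n → R} (hν : ν = δ + γ • (ν ᵥ* M)) (f : n → R) :
    ν ⬝ᵥ (γ • (M *ᵥ f) - f) = -(δ ⬝ᵥ f) := by
  rw [eq_sub_of_add_eq hν.symm, sub_dotProduct, dotProduct_sub, dotProduct_smul, dotProduct_mulVec,
    smul_dotProduct]
  abel

variable {γ : ℝ}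

theorem summable_geometric_mul_of_mem_stdSimplex (hγ0 : 0 ≤ γ) (hγ1 : γ < 1)
    {d : ℕ → n → ℝ} (hd : ∀ t, d t ∈ stdSimplex ℝ n) (s : n) :
    Summable fun t => γ ^ t * d t s := by
  refine (summable_geometric_of_lt_one hγ0 hγ1).of_nonneg_of_le
    (fun t => mul_nonneg (pow_nonneg hγ0 t) ((hd t).1 s)) fun t => ?_
  exact mul_le_of_le_one_right (pow_nonneg hγ0 t) (mem_Icc_of_mem_stdSimplex (hd t) s).2

theorem discounted_sum_eq_add_vecMul (hγ0 : 0 ≤ γ) (hγ1 : γ < 1) {M : Matrix n n ℝ}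
    {d : ℕ → n → ℝ} (hd : ∀ t, d t ∈ stdSimplex ℝ n) (hsucc : ∀ t, d (t + 1) = d t ᵥ* M) :
    (fun s => ∑' t, γ ^ t * d t s) = d 0 + γ • ((fun s => ∑' t, γ ^ t * d t s) ᵥ* M) := by
  have hsum := summable_geometric_mul_of_mem_stdSimplex hγ0 hγ1 hd
  funext s'
  rw [(hsum s').tsum_eq_zero_add]
  simp only [pow_zero, one_mul, Pi.add_apply, Pi.smul_apply, smul_eq_mul, vecMul, dotProduct,
    ← tsum_mul_right]
  rw [← Summable.tsum_finsetSum fun s _ => (hsum s).mul_right _, ← tsum_mul_left]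
  congr 1
  refine tsum_congr fun t => ?_
  rw [hsucc, vecMul, dotProduct, mul_sum, mul_sum]
  exact sum_congr rfl fun s _ => by ring

end DiscountedChain

section MDP

variable {S A : Type*} [Fintype S] [Fintype A]

def policyTransition (P : S → A → S → ℝ) (π : S → A → ℝ) : Matrix S S ℝ :=
  Matrix.of fun s s' => ∑ a, π s a * P s a s'

theorem policyTransition_mem_rowStochastic [DecidableEq S] {P : S → A → S → ℝ}
    {π : S → A → ℝ} (hP0 : ∀ s a s', 0 ≤ P s a s') (hP1 : ∀ s a, ∑ s', P s a s' = 1)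
    (hπ0 : ∀ s a, 0 ≤ π s a) (hπ1 : ∀ s, ∑ a, π s a = 1) :
    policyTransition P π ∈ rowStochastic ℝ S := by
  refine mem_rowStochastic_iff_sum.2 ⟨fun s s' => sum_nonneg fun a _ =>
    mul_nonneg (hπ0 s a) (hP0 s a s'), fun s => ?_⟩
  simp only [policyTransition, of_apply]
  rw [sum_comm]
  simp only [← mul_sum, hP1, mul_one, hπ1]

theorem sum_policy_mul_bellmanResidual {γ : ℝ} {P : S → A → S → ℝ} {r : S → A → ℝ}
    {π : S → A → ℝ} (hπ1 : ∀ s, ∑ a, π s a = 1) {V : S → ℝ}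
    (hV : ∀ s, V s = ∑ a, π s a * (r s a + γ * ∑ s', P s a s' * V s')) (W : S → ℝ) (s : S) :
    ∑ a, π s a * (r s a + γ * ∑ s', P s a s' * W s' - W s) =
      (γ • (policyTransition P π *ᵥ (W - V)) - (W - V)) s := by
  simp only [Pi.sub_apply, Pi.smul_apply, smul_eq_mul, mulVec, dotProduct, policyTransition,
    of_apply]
  have hW : ∑ a, π s a * (r s a + γ * ∑ s', P s a s' * W s' - W s) =
      ∑ a, π s a * (r s a + γ * ∑ s', P s a s' * W s') - W s := by
    simp only [mul_sub, sum_sub_distrib, ← sum_mul, hπ1, one_mul]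
  have hdiff : γ * ∑ s', (∑ a, π s a * P s a s') * (W s' - V s') =
      ∑ a, π s a * (γ * ∑ s', P s a s' * W s') - ∑ a, π s a * (γ * ∑ s', P s a s' * V s') := by
    simp only [sum_mul, mul_sum, ← sum_sub_distrib]
    rw [sum_comm]
    exact sum_congr rfl fun a _ => sum_congr rfl fun s' _ => by ring
  rw [hW, hdiff, hV s]
  simp only [mul_add, sum_add_distrib]
  ring

end MDP

theorem stmt_11_general {S A : Type*} [Fintype S] [Fintype A]
    [DecidableEq S]
    (γ : ℝ) (hγ0 : 0 ≤ γ) (hγ1 : γ < 1)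
    (P : S → A → S → ℝ) (hP0 : ∀ s a s', 0 ≤ P s a s') (hP1 : ∀ s a, ∑ s', P s a s' = 1)
    (r : S → A → ℝ)
    (π : S → A → ℝ)
    (hπ0 : ∀ s a, 0 ≤ π s a) (hπ1 : ∀ s, ∑ a, π s a = 1)
    (V V' : S → ℝ)
    (hV : ∀ s, V s = ∑ a, π s a * (r s a + γ * ∑ s', P s a s' * V s'))
    (Q' : S → A → ℝ) (hQ' : ∀ s a, Q' s a = r s a + γ * ∑ s', P s a s' * V' s')
    (Adv : S → A → ℝ) (hA : ∀ s a, Adv s a = Q' s a - V' s)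
    (s₀ : S)
    (d : ℕ → S → ℝ)
    (hd0 : ∀ s, d 0 s = if s = s₀ then 1 else 0)
    (hdsucc : ∀ t s', d (t + 1) s' = ∑ s, ∑ a, d t s * π s a * P s a s')
    (μ : S → ℝ) (hμ : ∀ s, μ s = (1 - γ) * ∑' t : ℕ, γ ^ t * d t s) :
    V' s₀ - V s₀ = -(1 / (1 - γ)) * ∑ s, ∑ a, μ s * π s a * Adv s a := by
  set M := policyTransition P π
  have hd0' : d 0 = Pi.single s₀ 1 := funext fun s => by rw [hd0, Pi.single_apply]
  have hsucc : ∀ t, d (t + 1) = d t ᵥ* M := fun t => funext fun s' => by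
    simp only [hdsucc, vecMul, dotProduct, M, policyTransition, of_apply, mul_sum, mul_assoc]
  have hd := mem_stdSimplex_of_vecMul_succ (policyTransition_mem_rowStochastic hP0 hP1 hπ0 hπ1)
    (hd0' ▸ single_mem_stdSimplex ℝ s₀) hsucc
  have hμ' : μ = (1 - γ) • fun s => ∑' t, γ ^ t * d t s := funext hμ
  have hrhs : ∑ s, ∑ a, μ s * π s a * Adv s a = (1 - γ) * -(V' s₀ - V s₀) := calc
    _ = μ ⬝ᵥ (γ • (M *ᵥ (V' - V)) - (V' - V)) := by
      refine sum_congr rfl fun s _ => ?_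
      rw [← sum_policy_mul_bellmanResidual hπ1 hV, mul_sum]
      exact sum_congr rfl fun a _ => by rw [hA, hQ', mul_assoc]
    _ = (1 - γ) * -(d 0 ⬝ᵥ (V' - V)) := by
      rw [hμ', smul_dotProduct, dotProduct_smul_mulVec_sub_eq_neg
        (discounted_sum_eq_add_vecMul hγ0 hγ1 hd hsucc), smul_eq_mul]
    _ = (1 - γ) * -(V' s₀ - V s₀) := by rw [hd0', single_dotProduct, one_mul, Pi.sub_apply]
  have hγ : 1 - γ ≠ 0 := by linarith
  rw [hrhs]
  field_simp

/-- Performance difference lemma, stated via Bellman fixed-point characterizations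
of the value functions and the discounted occupancy measure. -/
theorem stmt_11 {S A : Type*} [Fintype S] [Nonempty S] [Fintype A] [Nonempty A]
    [DecidableEq S]
    (γ : ℝ) (hγ0 : 0 ≤ γ) (hγ1 : γ < 1)
    (P : S → A → S → ℝ) (hP0 : ∀ s a s', 0 ≤ P s a s') (hP1 : ∀ s a, ∑ s', P s a s' = 1)
    (r : S → A → ℝ)
    (π π' : S → A → ℝ)
    (hπ0 : ∀ s a, 0 ≤ π s a) (hπ1 : ∀ s, ∑ a, π s a = 1)
    (hπ'0 : ∀ s a, 0 ≤ π' s a) (hπ'1 : ∀ s, ∑ a, π' s a = 1)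
    (V V' : S → ℝ)
    (hV : ∀ s, V s = ∑ a, π s a * (r s a + γ * ∑ s', P s a s' * V s'))
    (hV' : ∀ s, V' s = ∑ a, π' s a * (r s a + γ * ∑ s', P s a s' * V' s'))
    (Q' : S → A → ℝ) (hQ' : ∀ s a, Q' s a = r s a + γ * ∑ s', P s a s' * V' s')
    (Adv : S → A → ℝ) (hA : ∀ s a, Adv s a = Q' s a - V' s)
    (s₀ : S)
    (d : ℕ → S → ℝ)
    (hd0 : ∀ s, d 0 s = if s = s₀ then 1 else 0)
    (hdsucc : ∀ t s', d (t + 1) s' = ∑ s, ∑ a, d t s * π s a * P s a s')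
    (μ : S → ℝ) (hμ : ∀ s, μ s = (1 - γ) * ∑' t : ℕ, γ ^ t * d t s) :
    V' s₀ - V s₀ = -(1 / (1 - γ)) * ∑ s, ∑ a, μ s * π s a * Adv s a :=
  stmt_11_general γ hγ0 hγ1 P hP0 hP1 r π hπ0 hπ1 V V' hV Q' hQ' Adv hA s₀ d hd0 hdsucc μ hμ
end
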